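/- Proposition (r-th moment): for every natural number r ≥ 1, the r-th moment of the GRL distribution is μ_r = ∫_{0}^{∞} t^r · f(t) dt = (r·λ^(r/α)/(α(λ−1))) · (λ + r/α − 1) · Γ(r/α), where Γ denotes the Euler gamma function. -/

import Mathlib

/-! Expanding `λ + t^α/λ - 2` splits `t^r f(t)` into two scaled Gamma integrals
`∫ t^(q-1) exp(-t^α/λ) dt = λ^(q/α) Γ(q/α) / α`, with `q = r + α` and `q = r + 2α`;
the recurrence `Γ(x + 1) = x Γ(x)` brings both back to `Γ(r/α)`. -/

open Real MeasureTheory Set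

noncomputable def grlDensity (lam α t : ℝ) : ℝ :=
  α / (lam * (lam - 1)) * t ^ (α - 1) * (lam + t ^ α / lam - 2) * exp (-(t ^ α / lam))

lemma exp_neg_rpow_div_eq (α lam t : ℝ) : exp (-(t ^ α / lam)) = exp (-lam⁻¹ * t ^ α) := by
  ring_nf

section
variable {α lam q : ℝ}

lemma integrableOn_rpow_sub_one_mul_exp_neg_rpow_div (hα : 0 < α) (hlam : 0 < lam) (hq : 0 < q) :
    IntegrableOn (fun t : ℝ => t ^ (q - 1) * exp (-(t ^ α / lam))) (Ioi 0) := by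
  simpa only [exp_neg_rpow_div_eq] using
    integrableOn_rpow_mul_exp_neg_mul_rpow (by linarith) hα (inv_pos.mpr hlam)

lemma integral_rpow_sub_one_mul_exp_neg_rpow_div (hα : 0 < α) (hlam : 0 < lam) (hq : 0 < q) :
    ∫ t in Ioi (0 : ℝ), t ^ (q - 1) * exp (-(t ^ α / lam)) =
      lam ^ (q / α) / α * Gamma (q / α) := by
  simp only [exp_neg_rpow_div_eq]
  rw [integral_rpow_mul_exp_neg_mul_rpow hα (by linarith) (inv_pos.mpr hlam), sub_add_cancel,
    inv_rpow hlam.le, neg_div, rpow_neg hlam.le, inv_inv]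
  ring

end

lemma rpow_mul_grlDensity {lam α s t : ℝ} (hlam : lam ≠ 0) (ht : 0 < t) :
    t ^ s * grlDensity lam α t =
      α / (lam * (lam - 1)) * (lam - 2) * (t ^ (s + α - 1) * exp (-(t ^ α / lam))) +
        α / (lam * (lam - 1)) / lam * (t ^ (s + 2 * α - 1) * exp (-(t ^ α / lam))) := by
  rw [grlDensity, show s + α - 1 = s + (α - 1) by ring,
    show s + 2 * α - 1 = s + (α - 1) + α by ring, rpow_add ht, rpow_add ht, rpow_add ht]
  field_simp
  ring

theorem integral_rpow_mul_grlDensity {lam α s : ℝ} (hlam0 : 0 < lam) (hlam1 : lam ≠ 1)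
    (hα : 0 < α) (hs : 0 < s) :
    ∫ t in Ioi (0 : ℝ), t ^ s * grlDensity lam α t =
      (s * lam ^ (s / α) / (α * (lam - 1))) * (lam + s / α - 1) * Gamma (s / α) := by
  have hq₁ : 0 < s + α := by linarith
  have hq₂ : 0 < s + 2 * α := by linarith
  rw [setIntegral_congr_fun measurableSet_Ioi fun t ht => rpow_mul_grlDensity hlam0.ne' ht,
    integral_add ((integrableOn_rpow_sub_one_mul_exp_neg_rpow_div hα hlam0 hq₁).const_mul _)
      ((integrableOn_rpow_sub_one_mul_exp_neg_rpow_div hα hlam0 hq₂).const_mul _),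
    integral_const_mul, integral_const_mul,
    integral_rpow_sub_one_mul_exp_neg_rpow_div hα hlam0 hq₁,
    integral_rpow_sub_one_mul_exp_neg_rpow_div hα hlam0 hq₂]
  have hx : 0 < s / α := div_pos hs hα
  have h₁ : (s + α) / α = s / α + 1 := by field_simp
  have h₂ : (s + 2 * α) / α = s / α + 1 + 1 := by field_simp; ring
  rw [h₁, h₂, Gamma_add_one (by positivity : s / α + 1 ≠ 0), Gamma_add_one hx.ne']
  simp only [rpow_add_one hlam0.ne']
  have hlam_sub : lam - 1 ≠ 0 := sub_ne_zero.mpr hlam1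
  field_simp
  ring

/-- The r-th moment of the GRL distribution:
μ_r = (r λ^(r/α) / (α(λ-1))) (λ + r/α - 1) Γ(r/α) for natural r ≥ 1. -/
theorem grl_moment (lam α : ℝ) (hlam : 2 ≤ lam) (hα : 0 < α) (r : ℕ) (hr : 1 ≤ r) :
    ∫ t in Set.Ioi (0 : ℝ),
      t ^ r * ((α / (lam * (lam - 1))) * t ^ (α - 1) * (lam + t ^ α / lam - 2) *
        Real.exp (-(t ^ α / lam)))
      = ((r : ℝ) * lam ^ ((r : ℝ) / α) / (α * (lam - 1))) * (lam + (r : ℝ) / α - 1) *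
          Real.Gamma ((r : ℝ) / α) := by
  have hlam1 : 1 < lam := by linarith
  have hmoment := integral_rpow_mul_grlDensity (s := r) (by linarith) hlam1.ne' hα
    (by exact_mod_cast hr)
  simpa only [grlDensity, rpow_natCast] using hmoment
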